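/- Assume the abstract setting described in the context. Let μ > 0 satisfy M·c·μ^{ρ−1}·B ≤ 1/4, and let g : (0,∞) → V be continuous with t^{αε}‖g(t)‖_V ≤ (3/4)μ for all t > 0. Then there exists exactly one continuous u : (0,∞) → V such that sup_{t>0} t^{αε}‖u(t)‖_V ≤ μ and u is a mild solution with forcing g on (0,∞). -/

import Mathlib

/-! Writing `h(t) = t^{αε} u(t)` identifies the functions with `sup_{t>0} t^{αε}‖u t‖ ≤ μ` with the
closed `μ`-ball of bounded continuous functions on `(0,∞)`, a complete metric space. The map
`u ↦ g + ∫₀^t R(t-s) f(u(s)) ds` sends this ball into itself and is a `1/2`-contraction there: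
after the substitution `s = tσ`, the smoothing bound on `R` and the growth bound on `f` reduce each
weighted estimate to the Beta integral `B`, the powers of `t` cancelling exactly, so that
`M c μ^{ρ-1} B ≤ 1/4` yields both `3μ/4 + μ/4 ≤ μ` and the Lipschitz constant `2 · 1/4`. Banach's
fixed-point theorem then gives existence and uniqueness. -/

open MeasureTheory Set Filter Topology intervalIntegral
open scoped ENNReal

/-- `u` is a mild solution with forcing `g` on the set `S ⊆ (0,∞)`: `u` is continuous on `S`
and for every `t ∈ S` the Bochner integral `∫₀^t R(t-s) f(u(s)) ds` converges and
`u t = g t + ∫₀^t R(t-s) f(u(s)) ds`. -/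
def IsMildSolutionOn {V W : Type*} [NormedAddCommGroup V] [NormedSpace ℝ V]
    [NormedAddCommGroup W] [NormedSpace ℝ W]
    (R : ℝ → W →L[ℝ] V) (f : V → W) (g u : ℝ → V) (S : Set ℝ) : Prop :=
  ContinuousOn u S ∧ ∀ t ∈ S,
    IntervalIntegrable (fun s => R (t - s) (f (u s))) volume 0 t ∧
    u t = g t + ∫ s in (0:ℝ)..t, R (t - s) (f (u s))

open scoped BoundedContinuousFunction

lemma ae_imp_of_forall_Ioo {a b : ℝ} {P : ℝ → Prop} (h : ∀ x ∈ Ioo a b, P x) :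
    ∀ᵐ x ∂volume, x ∈ Ioc a b → P x := by
  filter_upwards [Measure.ae_ne volume b] with x hxb hx
  exact h x ⟨hx.1, hx.2.lt_of_ne hxb⟩

lemma Real.eventually_rpow_le_add_one {t₀ : ℝ} (ht₀ : 0 < t₀) (e : ℝ) :
    ∀ᶠ t in 𝓝 t₀, 0 < t ∧ t ^ e ≤ t₀ ^ e + 1 := by
  refine Filter.Eventually.and (Ioi_mem_nhds ht₀) ?_
  have hcont : ContinuousAt (fun t : ℝ => t ^ e) t₀ :=
    Real.continuousAt_rpow_const _ _ (Or.inl ht₀.ne')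
  exact (hcont.eventually_lt continuousAt_const (lt_add_one _)).mono fun _ => le_of_lt

lemma Real.le_mul_rpow_neg_of_rpow_mul_le {s a x K : ℝ} (hs : 0 < s) (h : s ^ a * x ≤ K) :
    x ≤ K * s ^ (-a) := by
  rwa [Real.rpow_neg hs.le, ← div_eq_mul_inv, le_div_iff₀ (Real.rpow_pos_of_pos hs a), mul_comm]

section WeightedSpace

variable {V : Type*} [NormedAddCommGroup V] [NormedSpace ℝ V]

def weightedBall (a μ : ℝ) : Set (ℝ → V) :=
  {u | ContinuousOn u (Ioi 0) ∧ ∀ t > (0:ℝ), t ^ a * ‖u t‖ ≤ μ}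

noncomputable def unweight (a : ℝ) (h : Ioi (0:ℝ) →ᵇ V) (t : ℝ) : V :=
  if ht : 0 < t then t ^ (-a) • h ⟨t, ht⟩ else 0

variable {a μ : ℝ}

lemma unweight_apply (h : Ioi (0:ℝ) →ᵇ V) {t : ℝ} (ht : 0 < t) :
    unweight a h t = t ^ (-a) • h ⟨t, ht⟩ :=
  dif_pos ht

lemma Real.rpow_smul_rpow_neg_smul {t : ℝ} (ht : 0 < t) (x : V) : t ^ a • t ^ (-a) • x = x := by
  rw [smul_smul, ← Real.rpow_add ht, add_neg_cancel, Real.rpow_zero, one_smul]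

lemma continuousOn_unweight (h : Ioi (0:ℝ) →ᵇ V) : ContinuousOn (unweight a h) (Ioi 0) := by
  rw [continuousOn_iff_continuous_domRestrict]
  have hrpow : Continuous fun t : Ioi (0:ℝ) => (t : ℝ) ^ (-a) :=
    continuous_subtype_val.rpow_const fun t => Or.inl t.2.ne'
  convert hrpow.smul h.continuous using 1
  funext t
  exact unweight_apply h t.2

lemma rpow_mul_norm_unweight_sub_le (h₁ h₂ : Ioi (0:ℝ) →ᵇ V) {t : ℝ} (ht : 0 < t) :
    t ^ a * ‖unweight a h₁ t - unweight a h₂ t‖ ≤ dist h₁ h₂ := by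
  rw [unweight_apply h₁ ht, unweight_apply h₂ ht, ← smul_sub, ← Real.norm_of_nonneg
    (Real.rpow_nonneg ht.le a), ← norm_smul, Real.rpow_smul_rpow_neg_smul ht, ← dist_eq_norm]
  exact BoundedContinuousFunction.dist_coe_le_dist _

lemma unweight_mem_weightedBall {h : Ioi (0:ℝ) →ᵇ V} (hh : ‖h‖ ≤ μ) :
    unweight a h ∈ weightedBall a μ := by
  refine ⟨continuousOn_unweight h, fun t ht => ?_⟩
  have := rpow_mul_norm_unweight_sub_le (a := a) h 0 ht
  simp only [unweight, BoundedContinuousFunction.coe_zero, Pi.zero_apply, smul_zero, dite_eq_ite,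
    ite_self, sub_zero, dist_zero_right] at this
  exact this.trans hh

noncomputable def weight (a : ℝ) {u : ℝ → V} (hu : u ∈ weightedBall a μ) : Ioi (0:ℝ) →ᵇ V :=
  BoundedContinuousFunction.ofNormedAddCommGroup (fun t => (t : ℝ) ^ a • u t)
    ((continuous_subtype_val.rpow_const fun t => Or.inl t.2.ne').smul
      (continuousOn_iff_continuous_domRestrict.1 hu.1)) μ
    fun t => by
      rw [norm_smul, Real.norm_of_nonneg (Real.rpow_nonneg t.2.le a)]
      exact hu.2 t t.2

lemma weight_apply {u : ℝ → V} (hu : u ∈ weightedBall a μ) (t : Ioi (0:ℝ)) :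
    weight a hu t = (t : ℝ) ^ a • u t :=
  rfl

lemma norm_weight_le {u : ℝ → V} (hu : u ∈ weightedBall a μ) (hμ : 0 ≤ μ) :
    ‖weight a hu‖ ≤ μ :=
  BoundedContinuousFunction.norm_ofNormedAddCommGroup_le _ hμ _

lemma unweight_weight {u : ℝ → V} (hu : u ∈ weightedBall a μ) :
    EqOn (unweight a (weight a hu)) u (Ioi 0) := fun t ht => by
  rw [unweight_apply _ ht, weight_apply, smul_smul, ← Real.rpow_add ht, neg_add_cancel,
    Real.rpow_zero, one_smul]

lemma dist_weight_le {u v : ℝ → V} (hu : u ∈ weightedBall a μ) (hv : v ∈ weightedBall a μ)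
    {D : ℝ} (hD : 0 ≤ D) (huv : ∀ t > (0:ℝ), t ^ a * ‖u t - v t‖ ≤ D) :
    dist (weight a hu) (weight a hv) ≤ D := by
  refine (BoundedContinuousFunction.dist_le hD).2 fun t => ?_
  rw [dist_eq_norm, weight_apply, weight_apply, ← smul_sub, norm_smul,
    Real.norm_of_nonneg (Real.rpow_nonneg t.2.le a)]
  exact huv t t.2

end WeightedSpace

section WeightedFixedPoint

variable {V : Type*} [NormedAddCommGroup V] [NormedSpace ℝ V] [CompleteSpace V]

theorem exists_unique_fixedPoint_weightedBall {a μ q : ℝ} (hμ : 0 ≤ μ) (hq₀ : 0 ≤ q)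
    (hq : q < 1) {Φ : (ℝ → V) → ℝ → V}
    (hΦ : ∀ u ∈ weightedBall a μ, Φ u ∈ weightedBall a μ)
    (hΦ_contr : ∀ u ∈ weightedBall a μ, ∀ v ∈ weightedBall a μ, ∀ D ≥ (0:ℝ),
      (∀ t > (0:ℝ), t ^ a * ‖u t - v t‖ ≤ D) → ∀ t > (0:ℝ), t ^ a * ‖Φ u t - Φ v t‖ ≤ q * D) :
    ∃ u ∈ weightedBall a μ, EqOn u (Φ u) (Ioi 0) ∧
      ∀ v ∈ weightedBall a μ, EqOn v (Φ v) (Ioi 0) → EqOn v u (Ioi 0) := by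
  let S := Metric.closedBall (0 : Ioi (0:ℝ) →ᵇ V) μ
  have hS : ∀ h : S, unweight a h.1 ∈ weightedBall a μ := fun h =>
    unweight_mem_weightedBall (mem_closedBall_zero_iff.1 h.2)
  let ψ : S → S := fun h =>
    ⟨weight a (hΦ _ (hS h)), mem_closedBall_zero_iff.2 (norm_weight_le _ hμ)⟩
  have hψ : ContractingWith ⟨q, hq₀⟩ ψ := by
    refine ⟨hq, LipschitzWith.of_dist_le_mul fun h₁ h₂ => ?_⟩
    exact dist_weight_le (hΦ _ (hS h₁)) (hΦ _ (hS h₂)) (mul_nonneg hq₀ dist_nonneg) <|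
      hΦ_contr _ (hS h₁) _ (hS h₂) _ dist_nonneg fun t ht =>
        rpow_mul_norm_unweight_sub_le h₁.1 h₂.1 ht
  have hΦ_congr : ∀ u ∈ weightedBall a μ, ∀ v ∈ weightedBall a μ, EqOn u v (Ioi 0) →
      EqOn (Φ u) (Φ v) (Ioi 0) := by
    intro u hu v hv huv t ht
    have h := hΦ_contr u hu v hv 0 le_rfl (fun s hs => by simp [huv hs]) t ht
    rw [mul_zero] at h
    exact sub_eq_zero.1
      (norm_le_zero_iff.1 (nonpos_of_mul_nonpos_right h (Real.rpow_pos_of_pos ht a)))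
  have : CompleteSpace S := Metric.isClosed_closedBall.completeSpace_coe
  have : Nonempty S := ⟨⟨0, Metric.mem_closedBall_self hμ⟩⟩
  set h₀ := ContractingWith.fixedPoint ψ hψ
  have hfix : ∀ h : S, ψ h = h → EqOn (unweight a h.1) (Φ (unweight a h.1)) (Ioi 0) := by
    intro h hh t ht
    calc unweight a h.1 t = unweight a (ψ h).1 t := by rw [hh]
      _ = Φ (unweight a h.1) t := unweight_weight (hΦ _ (hS h)) ht
  refine ⟨unweight a h₀.1, hS h₀, hfix h₀ hψ.fixedPoint_isFixedPt, fun v hv hvΦ => ?_⟩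
  let hv' : S := ⟨weight a hv, mem_closedBall_zero_iff.2 (norm_weight_le hv hμ)⟩
  have hv'_fix : ψ hv' = hv' := by
    refine Subtype.ext (BoundedContinuousFunction.ext fun t => ?_)
    simp only [ψ, hv', weight_apply]
    rw [hΦ_congr _ (hS hv') v hv (unweight_weight hv) t.2, ← hvΦ t.2]
  intro t ht
  calc v t = unweight a hv'.1 t := (unweight_weight hv ht).symm
    _ = unweight a h₀.1 t := by rw [hψ.fixedPoint_unique hv'_fix]

end WeightedFixedPoint

section Duhamel

variable {V W : Type*} [NormedAddCommGroup V] [NormedSpace ℝ V]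
  [NormedAddCommGroup W] [NormedSpace ℝ W]

noncomputable def duhamel (R : ℝ → W →L[ℝ] V) (φ : ℝ → W) (t : ℝ) : V :=
  ∫ s in (0:ℝ)..t, R (t - s) (φ s)

lemma ContinuousLinearMap.continuousAt_uncurry_apply_of_eventually_opNorm_le {X : Type*}
    [TopologicalSpace X] {R : X → W →L[ℝ] V} {x₀ : X} {w₀ : W} {K : ℝ}
    (hR : ContinuousAt (fun x => R x w₀) x₀) (hK : ∀ᶠ x in 𝓝 x₀, ‖R x‖ ≤ K) :
    ContinuousAt (fun p : X × W => R p.1 p.2) (x₀, w₀) := by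
  have hsmall : Tendsto (fun p : X × W => R p.1 (p.2 - w₀)) (𝓝 (x₀, w₀)) (𝓝 0) := by
    have hlim : Tendsto (fun p : X × W => K * ‖p.2 - w₀‖) (𝓝 (x₀, w₀)) (𝓝 0) := by
      simpa using
        ((continuous_snd.sub (continuous_const (y := w₀))).norm.const_mul K).tendsto (x₀, w₀)
    refine squeeze_zero_norm' ?_ hlim
    filter_upwards [(continuous_fst.tendsto (x₀, w₀)).eventually hK] with p hp
    exact (R p.1).le_of_opNorm_le hp _
  have h := hsmall.add (hR.comp continuousAt_fst)
  simp only [map_sub, Function.comp_apply, sub_add_cancel, zero_add] at h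
  exact h

variable {R : ℝ → W →L[ℝ] V} {φ : ℝ → W} {M γ β C : ℝ}

lemma eventually_opNorm_le_of_rpow_bound (hM : 0 ≤ M)
    (hRbound : ∀ t > (0:ℝ), ∀ w : W, ‖R t w‖ ≤ M * t ^ (γ - 1) * ‖w‖) {t₀ : ℝ} (ht₀ : 0 < t₀) :
    ∀ᶠ t in 𝓝 t₀, ‖R t‖ ≤ M * (t₀ ^ (γ - 1) + 1) := by
  filter_upwards [Real.eventually_rpow_le_add_one ht₀ (γ - 1)] with t ⟨ht, hle⟩
  refine (R t).opNorm_le_bound (by positivity) fun w => (hRbound t ht w).trans ?_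
  gcongr

lemma continuousAt_duhamel_integrand (hM : 0 ≤ M)
    (hRcont : ∀ w : W, ContinuousOn (fun t => R t w) (Ioi (0:ℝ)))
    (hRbound : ∀ t > (0:ℝ), ∀ w : W, ‖R t w‖ ≤ M * t ^ (γ - 1) * ‖w‖)
    (hφ : ContinuousOn φ (Ioi 0)) {t s : ℝ} (hs : 0 < s) (hst : s < t) :
    ContinuousAt (fun p : ℝ × ℝ => R (p.1 - p.2) (φ p.2)) (t, s) := by
  have hts : 0 < t - s := sub_pos.2 hst
  have hjoint := ContinuousLinearMap.continuousAt_uncurry_apply_of_eventually_opNorm_le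
    ((hRcont (φ s)).continuousAt (Ioi_mem_nhds hts))
    (eventually_opNorm_le_of_rpow_bound hM hRbound hts)
  exact hjoint.comp (f := fun p : ℝ × ℝ => (p.1 - p.2, φ p.2))
    ((continuousAt_fst.sub continuousAt_snd).prodMk
      ((hφ.continuousAt (Ioi_mem_nhds hs)).comp (x := (t, s)) continuousAt_snd))

lemma continuousAt_duhamel_integrand_rescaled (hM : 0 ≤ M)
    (hRcont : ∀ w : W, ContinuousOn (fun t => R t w) (Ioi (0:ℝ)))
    (hRbound : ∀ t > (0:ℝ), ∀ w : W, ‖R t w‖ ≤ M * t ^ (γ - 1) * ‖w‖)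
    (hφ : ContinuousOn φ (Ioi 0)) {t σ : ℝ} (ht : 0 < t) (hσ : σ ∈ Ioo (0:ℝ) 1) :
    ContinuousAt (fun p : ℝ × ℝ => R (p.1 - p.1 * p.2) (φ (p.1 * p.2))) (t, σ) := by
  have h := continuousAt_duhamel_integrand hM hRcont hRbound hφ (mul_pos ht hσ.1)
    (mul_lt_of_lt_one_right ht hσ.2)
  exact h.comp (f := fun p : ℝ × ℝ => (p.1, p.1 * p.2)) (x := (t, σ))
    (continuousAt_fst.prodMk (continuousAt_fst.mul continuousAt_snd))

lemma duhamel_eq_smul_integral_rescaled (t : ℝ) :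
    duhamel R φ t = t • ∫ σ in (0:ℝ)..1, R (t - t * σ) (φ (t * σ)) := by
  unfold duhamel
  simpa using (intervalIntegral.smul_integral_comp_mul_left
    (fun s => R (t - s) (φ s)) (a := 0) (b := 1) t).symm

lemma norm_duhamel_integrand_rescaled_le (hM : 0 ≤ M)
    (hRbound : ∀ t > (0:ℝ), ∀ w : W, ‖R t w‖ ≤ M * t ^ (γ - 1) * ‖w‖)
    (hφb : ∀ s > (0:ℝ), ‖φ s‖ ≤ C * s ^ (-β)) {t σ : ℝ} (ht : 0 < t) (hσ : σ ∈ Ioo (0:ℝ) 1) :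
    ‖R (t - t * σ) (φ (t * σ))‖ ≤ M * C * t ^ (γ - 1 - β) * ((1 - σ) ^ (γ - 1) * σ ^ (-β)) := by
  have h1σ : 0 < 1 - σ := sub_pos.2 hσ.2
  have hfac : t - t * σ = t * (1 - σ) := by ring
  calc ‖R (t - t * σ) (φ (t * σ))‖
      ≤ M * (t - t * σ) ^ (γ - 1) * ‖φ (t * σ)‖ := hRbound _ (by rw [hfac]; positivity) _
    _ ≤ M * (t - t * σ) ^ (γ - 1) * (C * (t * σ) ^ (-β)) := by
        gcongr
        · rw [hfac]; positivity
        · exact hφb _ (mul_pos ht hσ.1)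
    _ = M * C * t ^ (γ - 1 - β) * ((1 - σ) ^ (γ - 1) * σ ^ (-β)) := by
        rw [hfac, Real.mul_rpow ht.le h1σ.le, Real.mul_rpow ht.le hσ.1.le, sub_eq_add_neg _ β,
          Real.rpow_add ht]
        ring

lemma intervalIntegrable_duhamel_integrand_rescaled (hM : 0 ≤ M)
    (hRcont : ∀ w : W, ContinuousOn (fun t => R t w) (Ioi (0:ℝ)))
    (hRbound : ∀ t > (0:ℝ), ∀ w : W, ‖R t w‖ ≤ M * t ^ (γ - 1) * ‖w‖)
    (hφc : ContinuousOn φ (Ioi 0)) (hφb : ∀ s > (0:ℝ), ‖φ s‖ ≤ C * s ^ (-β))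
    (hBint : IntervalIntegrable (fun s => (1 - s) ^ (γ - 1) * s ^ (-β)) volume 0 1)
    {t : ℝ} (ht : 0 < t) :
    IntervalIntegrable (fun σ => R (t - t * σ) (φ (t * σ))) volume 0 1 := by
  rw [intervalIntegrable_iff_integrableOn_Ioo_of_le zero_le_one] at hBint ⊢
  have hcont : ContinuousOn (fun σ => R (t - t * σ) (φ (t * σ))) (Ioo 0 1) := fun σ hσ =>
    ((continuousAt_duhamel_integrand_rescaled hM hRcont hRbound hφc ht hσ).comp
      (x := σ) (continuousAt_const.prodMk continuousAt_id)).continuousWithinAt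
  refine (hBint.const_mul (M * C * t ^ (γ - 1 - β))).mono'
    (hcont.aestronglyMeasurable measurableSet_Ioo) ?_
  exact (ae_restrict_iff' measurableSet_Ioo).2 <| Eventually.of_forall fun σ hσ =>
    norm_duhamel_integrand_rescaled_le hM hRbound hφb ht hσ

lemma intervalIntegrable_duhamel_integrand (hM : 0 ≤ M)
    (hRcont : ∀ w : W, ContinuousOn (fun t => R t w) (Ioi (0:ℝ)))
    (hRbound : ∀ t > (0:ℝ), ∀ w : W, ‖R t w‖ ≤ M * t ^ (γ - 1) * ‖w‖)
    (hφc : ContinuousOn φ (Ioi 0)) (hφb : ∀ s > (0:ℝ), ‖φ s‖ ≤ C * s ^ (-β))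
    (hBint : IntervalIntegrable (fun s => (1 - s) ^ (γ - 1) * s ^ (-β)) volume 0 1)
    {t : ℝ} (ht : 0 < t) :
    IntervalIntegrable (fun s => R (t - s) (φ s)) volume 0 t := by
  have h := (intervalIntegrable_duhamel_integrand_rescaled hM hRcont hRbound hφc hφb hBint
    ht).comp_mul_left (c := t⁻¹)
  simpa only [zero_div, one_div, inv_inv, mul_inv_cancel_left₀ ht.ne'] using h

lemma rpow_mul_norm_duhamel_le (hM : 0 ≤ M)
    (hRbound : ∀ t > (0:ℝ), ∀ w : W, ‖R t w‖ ≤ M * t ^ (γ - 1) * ‖w‖)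
    (hφb : ∀ s > (0:ℝ), ‖φ s‖ ≤ C * s ^ (-β))
    (hBint : IntervalIntegrable (fun s => (1 - s) ^ (γ - 1) * s ^ (-β)) volume 0 1)
    {t : ℝ} (ht : 0 < t) :
    t ^ (β - γ) * ‖duhamel R φ t‖
      ≤ M * C * ∫ s in (0:ℝ)..1, (1 - s) ^ (γ - 1) * s ^ (-β) := by
  have hint : ‖∫ σ in (0:ℝ)..1, R (t - t * σ) (φ (t * σ))‖
      ≤ M * C * t ^ (γ - 1 - β) * ∫ s in (0:ℝ)..1, (1 - s) ^ (γ - 1) * s ^ (-β) := by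
    rw [← intervalIntegral.integral_const_mul]
    exact intervalIntegral.norm_integral_le_of_norm_le zero_le_one
      (ae_imp_of_forall_Ioo fun σ hσ => norm_duhamel_integrand_rescaled_le hM hRbound hφb ht hσ)
      (hBint.const_mul _)
  have hpow : t ^ (β - γ) * (t * t ^ (γ - 1 - β)) = 1 := by
    rw [mul_comm t, ← Real.rpow_add_one ht.ne', ← Real.rpow_add ht,
      show β - γ + (γ - 1 - β + 1) = 0 by ring, Real.rpow_zero]
  rw [duhamel_eq_smul_integral_rescaled, norm_smul, Real.norm_of_nonneg ht.le]
  calc t ^ (β - γ) * (t * ‖∫ σ in (0:ℝ)..1, R (t - t * σ) (φ (t * σ))‖)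
      ≤ t ^ (β - γ) * (t * (M * C * t ^ (γ - 1 - β) *
          ∫ s in (0:ℝ)..1, (1 - s) ^ (γ - 1) * s ^ (-β))) := by gcongr
    _ = M * C * ∫ s in (0:ℝ)..1, (1 - s) ^ (γ - 1) * s ^ (-β) := by
        linear_combination (M * C * ∫ s in (0:ℝ)..1, (1 - s) ^ (γ - 1) * s ^ (-β)) * hpow

lemma continuousOn_duhamel (hM : 0 ≤ M)
    (hRcont : ∀ w : W, ContinuousOn (fun t => R t w) (Ioi (0:ℝ)))
    (hRbound : ∀ t > (0:ℝ), ∀ w : W, ‖R t w‖ ≤ M * t ^ (γ - 1) * ‖w‖)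
    (hC : 0 ≤ C) (hφc : ContinuousOn φ (Ioi 0)) (hφb : ∀ s > (0:ℝ), ‖φ s‖ ≤ C * s ^ (-β))
    (hBint : IntervalIntegrable (fun s => (1 - s) ^ (γ - 1) * s ^ (-β)) volume 0 1) :
    ContinuousOn (duhamel R φ) (Ioi 0) := by
  intro t₀ ht₀
  rw [show duhamel R φ = _ from funext duhamel_eq_smul_integral_rescaled]
  refine (continuousAt_id.smul ?_).continuousWithinAt
  -- dominated convergence in the rescaled variable, where the domain `[0,1]` no longer moves
  refine intervalIntegral.continuousAt_of_dominated_interval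
    (bound := fun σ => M * C * (t₀ ^ (γ - 1 - β) + 1) * ((1 - σ) ^ (γ - 1) * σ ^ (-β))) ?_ ?_
    (hBint.const_mul _) ?_
  · filter_upwards [Ioi_mem_nhds ht₀] with t ht
    exact (intervalIntegrable_duhamel_integrand_rescaled hM hRcont hRbound hφc hφb hBint
      ht).def'.aestronglyMeasurable
  · filter_upwards [Real.eventually_rpow_le_add_one ht₀ (γ - 1 - β)] with t ⟨ht, hle⟩
    rw [uIoc_of_le zero_le_one]
    refine ae_imp_of_forall_Ioo fun σ hσ =>
      (norm_duhamel_integrand_rescaled_le hM hRbound hφb ht hσ).trans ?_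
    have : 0 ≤ (1 - σ) ^ (γ - 1) * σ ^ (-β) :=
      mul_nonneg (Real.rpow_nonneg (sub_pos.2 hσ.2).le _) (Real.rpow_nonneg hσ.1.le _)
    gcongr
  · rw [uIoc_of_le zero_le_one]
    exact ae_imp_of_forall_Ioo fun σ hσ =>
      (continuousAt_duhamel_integrand_rescaled hM hRcont hRbound hφc ht₀ hσ).comp
        (f := fun t => (t, σ)) (x := t₀) (continuousAt_id.prodMk continuousAt_const)

lemma duhamel_sub {ψ : ℝ → W} {t : ℝ}
    (hφ : IntervalIntegrable (fun s => R (t - s) (φ s)) volume 0 t)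
    (hψ : IntervalIntegrable (fun s => R (t - s) (ψ s)) volume 0 t) :
    duhamel R φ t - duhamel R ψ t = duhamel R (fun s => φ s - ψ s) t := by
  simp only [duhamel, ← intervalIntegral.integral_sub hφ hψ, map_sub]

end Duhamel

section Nonlinearity

variable {V W : Type*} [NormedAddCommGroup V] [NormedAddCommGroup W] {f : V → W} {c p : ℝ}

lemma continuous_of_norm_sub_le_mul_rpow (hp : 0 ≤ p)
    (hf : ∀ x y : V, ‖f x - f y‖ ≤ c * (‖x‖ ^ p + ‖y‖ ^ p) * ‖x - y‖) : Continuous f := by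
  refine continuous_iff_continuousAt.2 fun y => tendsto_iff_norm_sub_tendsto_zero.2 ?_
  have hlim : Tendsto (fun x => c * (‖x‖ ^ p + ‖y‖ ^ p) * ‖x - y‖) (𝓝 y)
      (𝓝 (c * (‖y‖ ^ p + ‖y‖ ^ p) * ‖y - y‖)) :=
    ((((continuous_norm.rpow_const fun _ => Or.inr hp).add continuous_const).const_mul c).mul
      (continuous_id.sub continuous_const).norm).tendsto y
  rw [sub_self, norm_zero, mul_zero] at hlim
  exact squeeze_zero (fun _ => norm_nonneg _) (fun x => hf x y) hlim

lemma norm_sub_le_of_le_mul_rpow_neg (hc : 0 ≤ c) (hp : 0 ≤ p)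
    (hf : ∀ x y : V, ‖f x - f y‖ ≤ c * (‖x‖ ^ p + ‖y‖ ^ p) * ‖x - y‖)
    {x y : V} {a s K₁ K₂ D : ℝ} (hs : 0 < s) (hK₁ : 0 ≤ K₁) (hK₂ : 0 ≤ K₂)
    (hx : ‖x‖ ≤ K₁ * s ^ (-a)) (hy : ‖y‖ ≤ K₂ * s ^ (-a)) (hxy : ‖x - y‖ ≤ D * s ^ (-a)) :
    ‖f x - f y‖ ≤ c * (K₁ ^ p + K₂ ^ p) * D * s ^ (-(a * p + a)) := by
  have hpow : ∀ {z : V} {K : ℝ}, 0 ≤ K → ‖z‖ ≤ K * s ^ (-a) →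
      ‖z‖ ^ p ≤ K ^ p * s ^ (-a * p) := fun hK hz => by
    rw [Real.rpow_mul hs.le, ← Real.mul_rpow hK (Real.rpow_nonneg hs.le _)]
    exact Real.rpow_le_rpow (norm_nonneg _) hz hp
  calc ‖f x - f y‖ ≤ c * (‖x‖ ^ p + ‖y‖ ^ p) * ‖x - y‖ := hf x y
    _ ≤ c * (K₁ ^ p * s ^ (-a * p) + K₂ ^ p * s ^ (-a * p)) * (D * s ^ (-a)) := by
        refine mul_le_mul (mul_le_mul_of_nonneg_left (add_le_add (hpow hK₁ hx) (hpow hK₂ hy)) hc)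
          hxy (norm_nonneg _) (mul_nonneg hc ?_)
        positivity
    _ = c * (K₁ ^ p + K₂ ^ p) * D * s ^ (-(a * p + a)) := by
        rw [neg_add, Real.rpow_add hs, neg_mul]
        ring

lemma norm_le_of_le_mul_rpow_neg (hc : 0 ≤ c) (hp : 0 < p) (hf0 : f 0 = 0)
    (hf : ∀ x y : V, ‖f x - f y‖ ≤ c * (‖x‖ ^ p + ‖y‖ ^ p) * ‖x - y‖)
    {x : V} {a s K : ℝ} (hs : 0 < s) (hK : 0 ≤ K) (hx : ‖x‖ ≤ K * s ^ (-a)) :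
    ‖f x‖ ≤ c * K ^ p * K * s ^ (-(a * p + a)) := by
  have h := norm_sub_le_of_le_mul_rpow_neg hc hp.le hf (y := 0) hs hK le_rfl hx
    (by simp) (by simpa using hx)
  rwa [hf0, sub_zero, Real.zero_rpow hp.ne', add_zero] at h

lemma norm_comp_le_of_mem_weightedBall (hc : 0 ≤ c) (hp : 0 < p) (hf0 : f 0 = 0)
    (hf : ∀ x y : V, ‖f x - f y‖ ≤ c * (‖x‖ ^ p + ‖y‖ ^ p) * ‖x - y‖) (hμ : 0 ≤ μ)
    {u : ℝ → V} (hu : u ∈ weightedBall a μ) :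
    ∀ s > (0:ℝ), ‖f (u s)‖ ≤ c * μ ^ p * μ * s ^ (-(a * p + a)) := fun s hs =>
  norm_le_of_le_mul_rpow_neg hc hp hf0 hf hs hμ
    (Real.le_mul_rpow_neg_of_rpow_mul_le hs (hu.2 s hs))

lemma norm_comp_sub_comp_le_of_mem_weightedBall (hc : 0 ≤ c) (hp : 0 ≤ p)
    (hf : ∀ x y : V, ‖f x - f y‖ ≤ c * (‖x‖ ^ p + ‖y‖ ^ p) * ‖x - y‖) (hμ : 0 ≤ μ)
    {u v : ℝ → V} (hu : u ∈ weightedBall a μ) (hv : v ∈ weightedBall a μ) {D : ℝ}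
    (huv : ∀ t > (0:ℝ), t ^ a * ‖u t - v t‖ ≤ D) :
    ∀ s > (0:ℝ), ‖f (u s) - f (v s)‖ ≤ c * (μ ^ p + μ ^ p) * D * s ^ (-(a * p + a)) :=
  fun s hs => norm_sub_le_of_le_mul_rpow_neg hc hp hf hs hμ hμ
    (Real.le_mul_rpow_neg_of_rpow_mul_le hs (hu.2 s hs))
    (Real.le_mul_rpow_neg_of_rpow_mul_le hs (hv.2 s hs))
    (Real.le_mul_rpow_neg_of_rpow_mul_le hs (huv s hs))

end Nonlinearity

section SmallData

variable {V W : Type*} [NormedAddCommGroup V] [NormedSpace ℝ V]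
  [NormedAddCommGroup W] [NormedSpace ℝ W] {R : ℝ → W →L[ℝ] V} {f : V → W} {a p M c μ : ℝ}

lemma intervalIntegrable_duhamel_integrand_comp (hM : 0 ≤ M)
    (hRcont : ∀ w : W, ContinuousOn (fun t => R t w) (Ioi (0:ℝ)))
    (hRbound : ∀ t > (0:ℝ), ∀ w : W, ‖R t w‖ ≤ M * t ^ (a * p - 1) * ‖w‖)
    (hc : 0 ≤ c) (hp : 0 < p) (hf0 : f 0 = 0)
    (hf : ∀ x y : V, ‖f x - f y‖ ≤ c * (‖x‖ ^ p + ‖y‖ ^ p) * ‖x - y‖)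
    (hBint : IntervalIntegrable
      (fun s => (1 - s) ^ (a * p - 1) * s ^ (-(a * p + a))) volume 0 1)
    (hμ : 0 ≤ μ) {u : ℝ → V} (hu : u ∈ weightedBall a μ) {t : ℝ} (ht : 0 < t) :
    IntervalIntegrable (fun s => R (t - s) (f (u s))) volume 0 t :=
  intervalIntegrable_duhamel_integrand hM hRcont hRbound
    ((continuous_of_norm_sub_le_mul_rpow hp.le hf).comp_continuousOn hu.1)
    (norm_comp_le_of_mem_weightedBall hc hp hf0 hf hμ hu) hBint ht

lemma add_duhamel_comp_mem_weightedBall (hM : 0 ≤ M)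
    (hRcont : ∀ w : W, ContinuousOn (fun t => R t w) (Ioi (0:ℝ)))
    (hRbound : ∀ t > (0:ℝ), ∀ w : W, ‖R t w‖ ≤ M * t ^ (a * p - 1) * ‖w‖)
    (hc : 0 ≤ c) (hp : 0 < p) (hf0 : f 0 = 0)
    (hf : ∀ x y : V, ‖f x - f y‖ ≤ c * (‖x‖ ^ p + ‖y‖ ^ p) * ‖x - y‖)
    (hBint : IntervalIntegrable
      (fun s => (1 - s) ^ (a * p - 1) * s ^ (-(a * p + a))) volume 0 1)
    (hμ : 0 ≤ μ)
    (hsmall : M * c * μ ^ p * (∫ s in (0:ℝ)..1, (1 - s) ^ (a * p - 1) * s ^ (-(a * p + a)))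
      ≤ 1 / 4)
    {g : ℝ → V} (hg : ContinuousOn g (Ioi 0)) (hgbdd : ∀ t > (0:ℝ), t ^ a * ‖g t‖ ≤ 3 / 4 * μ)
    {u : ℝ → V} (hu : u ∈ weightedBall a μ) :
    (fun t => g t + duhamel R (fun s => f (u s)) t) ∈ weightedBall a μ := by
  have hφc := (continuous_of_norm_sub_le_mul_rpow hp.le hf).comp_continuousOn hu.1
  have hφb := norm_comp_le_of_mem_weightedBall hc hp hf0 hf hμ hu
  refine ⟨hg.add (continuousOn_duhamel hM hRcont hRbound (by positivity) hφc hφb hBint),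
    fun t ht => ?_⟩
  have hduhamel := rpow_mul_norm_duhamel_le hM hRbound hφb hBint ht
  rw [add_sub_cancel_left] at hduhamel
  calc t ^ a * ‖g t + duhamel R (fun s => f (u s)) t‖
      ≤ t ^ a * ‖g t‖ + t ^ a * ‖duhamel R (fun s => f (u s)) t‖ := by
        rw [← mul_add]
        exact mul_le_mul_of_nonneg_left (norm_add_le _ _) (Real.rpow_nonneg ht.le a)
    _ ≤ μ := by linarith [hgbdd t ht, mul_le_mul_of_nonneg_right hsmall hμ]

lemma rpow_mul_norm_duhamel_comp_sub_le (hM : 0 ≤ M)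
    (hRcont : ∀ w : W, ContinuousOn (fun t => R t w) (Ioi (0:ℝ)))
    (hRbound : ∀ t > (0:ℝ), ∀ w : W, ‖R t w‖ ≤ M * t ^ (a * p - 1) * ‖w‖)
    (hc : 0 ≤ c) (hp : 0 < p) (hf0 : f 0 = 0)
    (hf : ∀ x y : V, ‖f x - f y‖ ≤ c * (‖x‖ ^ p + ‖y‖ ^ p) * ‖x - y‖)
    (hBint : IntervalIntegrable
      (fun s => (1 - s) ^ (a * p - 1) * s ^ (-(a * p + a))) volume 0 1)
    (hμ : 0 ≤ μ)
    (hsmall : M * c * μ ^ p * (∫ s in (0:ℝ)..1, (1 - s) ^ (a * p - 1) * s ^ (-(a * p + a)))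
      ≤ 1 / 4)
    {u v : ℝ → V} (hu : u ∈ weightedBall a μ) (hv : v ∈ weightedBall a μ) {D : ℝ} (hD : 0 ≤ D)
    (huv : ∀ t > (0:ℝ), t ^ a * ‖u t - v t‖ ≤ D) {t : ℝ} (ht : 0 < t) :
    t ^ a * ‖duhamel R (fun s => f (u s)) t - duhamel R (fun s => f (v s)) t‖ ≤ 1 / 2 * D := by
  rw [duhamel_sub
    (intervalIntegrable_duhamel_integrand_comp hM hRcont hRbound hc hp hf0 hf hBint hμ hu ht)
    (intervalIntegrable_duhamel_integrand_comp hM hRcont hRbound hc hp hf0 hf hBint hμ hv ht)]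
  have hduhamel := rpow_mul_norm_duhamel_le hM hRbound
    (norm_comp_sub_comp_le_of_mem_weightedBall hc hp.le hf hμ hu hv huv) hBint ht
  rw [add_sub_cancel_left] at hduhamel
  linarith [mul_le_mul_of_nonneg_right hsmall hD]

end SmallData

theorem global_fixed_point_general
    {V W : Type*} [NormedAddCommGroup V] [NormedSpace ℝ V] [CompleteSpace V]
    [NormedAddCommGroup W] [NormedSpace ℝ W]
    (ρ α ε M c B : ℝ)
    (hρ : 1 < ρ)
    (hM : 0 < M) (hc : 0 < c)
    (R : ℝ → W →L[ℝ] V)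
    (hRcont : ∀ w : W, ContinuousOn (fun t => R t w) (Ioi (0:ℝ)))
    (hRbound : ∀ t > (0:ℝ), ∀ w : W, ‖R t w‖ ≤ M * t ^ (α * (ρ - 1) * ε - 1) * ‖w‖)
    (f : V → W) (hf0 : f 0 = 0)
    (hf : ∀ x y : V, ‖f x - f y‖ ≤ c * (‖x‖ ^ (ρ - 1) + ‖y‖ ^ (ρ - 1)) * ‖x - y‖)
    (hBint : IntervalIntegrable
      (fun s => (1 - s) ^ (α * (ρ - 1) * ε - 1) * s ^ (-(α * ρ * ε))) volume 0 1)
    (hB : B = ∫ s in (0:ℝ)..1, (1 - s) ^ (α * (ρ - 1) * ε - 1) * s ^ (-(α * ρ * ε)))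
    (μ : ℝ) (hμ : 0 < μ) (hsmall : M * c * μ ^ (ρ - 1) * B ≤ 1 / 4)
    (g : ℝ → V) (hg : ContinuousOn g (Ioi 0))
    (hgbdd : ∀ t > (0:ℝ), t ^ (α * ε) * ‖g t‖ ≤ 3 / 4 * μ) :
    ∃ u : ℝ → V,
      (IsMildSolutionOn R f g u (Ioi 0) ∧
        ∀ t > (0:ℝ), t ^ (α * ε) * ‖u t‖ ≤ μ) ∧
      ∀ v : ℝ → V,
        (IsMildSolutionOn R f g v (Ioi 0) ∧
          ∀ t > (0:ℝ), t ^ (α * ε) * ‖v t‖ ≤ μ) →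
        EqOn v u (Ioi 0) := by
  have hp : 0 < ρ - 1 := sub_pos.2 hρ
  rw [show α * (ρ - 1) * ε = α * ε * (ρ - 1) by ring] at hRbound hBint hB
  rw [show α * ρ * ε = α * ε * (ρ - 1) + α * ε by ring] at hBint hB
  subst hB
  obtain ⟨u, hu, hfix, huniq⟩ := exists_unique_fixedPoint_weightedBall hμ.le (q := 1 / 2)
    (by norm_num) (by norm_num)
    (fun u hu => add_duhamel_comp_mem_weightedBall hM.le hRcont hRbound hc.le hp hf0 hf hBint
      hμ.le hsmall hg hgbdd hu)
    (fun u hu v hv D hD huv t ht => by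
      simpa only [add_sub_add_left_eq_sub] using rpow_mul_norm_duhamel_comp_sub_le hM.le hRcont
        hRbound hc.le hp hf0 hf hBint hμ.le hsmall hu hv hD huv ht)
  refine ⟨u, ⟨⟨hu.1, fun t ht => ⟨intervalIntegrable_duhamel_integrand_comp hM.le hRcont
    hRbound hc.le hp hf0 hf hBint hμ.le hu ht, hfix ht⟩⟩, hu.2⟩, ?_⟩
  rintro v ⟨⟨hvc, hv⟩, hvb⟩
  exact huniq v ⟨hvc, hvb⟩ fun t ht => (hv t ht).2

/-- **Fixed-point core of Theorem 1.2 (global existence for small data).**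
Under the abstract setting, if `M c μ^{ρ-1} B ≤ 1/4` and `g : (0,∞) → V` is continuous with
`t^{αε}‖g t‖ ≤ (3/4)μ` for all `t > 0`, there is exactly one continuous `u : (0,∞) → V` with
`sup_{t>0} t^{αε}‖u t‖ ≤ μ` which is a mild solution with forcing `g` on `(0,∞)`. -/
theorem global_fixed_point
    {V W : Type*} [NormedAddCommGroup V] [NormedSpace ℝ V] [CompleteSpace V]
    [NormedAddCommGroup W] [NormedSpace ℝ W] [CompleteSpace W]
    (ρ α ε M c B : ℝ)
    (hρ : 1 < ρ) (hα : 1 < α) (hε : 0 < ε) (hαρε : α * ρ * ε < 1)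
    (hM : 0 < M) (hc : 0 < c)
    (R : ℝ → W →L[ℝ] V)
    (hRcont : ∀ w : W, ContinuousOn (fun t => R t w) (Ioi (0:ℝ)))
    (hRbound : ∀ t > (0:ℝ), ∀ w : W, ‖R t w‖ ≤ M * t ^ (α * (ρ - 1) * ε - 1) * ‖w‖)
    (f : V → W) (hf0 : f 0 = 0)
    (hf : ∀ x y : V, ‖f x - f y‖ ≤ c * (‖x‖ ^ (ρ - 1) + ‖y‖ ^ (ρ - 1)) * ‖x - y‖)
    (hBint : IntervalIntegrable
      (fun s => (1 - s) ^ (α * (ρ - 1) * ε - 1) * s ^ (-(α * ρ * ε))) volume 0 1)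
    (hB : B = ∫ s in (0:ℝ)..1, (1 - s) ^ (α * (ρ - 1) * ε - 1) * s ^ (-(α * ρ * ε)))
    (μ : ℝ) (hμ : 0 < μ) (hsmall : M * c * μ ^ (ρ - 1) * B ≤ 1 / 4)
    (g : ℝ → V) (hg : ContinuousOn g (Ioi 0))
    (hgbdd : ∀ t > (0:ℝ), t ^ (α * ε) * ‖g t‖ ≤ 3 / 4 * μ) :
    ∃ u : ℝ → V,
      (IsMildSolutionOn R f g u (Ioi 0) ∧
        ∀ t > (0:ℝ), t ^ (α * ε) * ‖u t‖ ≤ μ) ∧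
      ∀ v : ℝ → V,
        (IsMildSolutionOn R f g v (Ioi 0) ∧
          ∀ t > (0:ℝ), t ^ (α * ε) * ‖v t‖ ≤ μ) →
        EqOn v u (Ioi 0) :=
  global_fixed_point_general ρ α ε M c B hρ hM hc R hRcont hRbound f hf0 hf hBint hB μ hμ hsmall g
    hg hgbdd
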